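/- arXiv:math/9303205 — 2 statements merged into one kernel-verified Lean document; each statement's English description precedes it below -/
import Mathlib

section
/- Let X be a Banach space, β a countable ordinal, N a linear subspace of X*, and (g_n)_{n≥1} a bounded sequence in X** such that for every ordinal γ < β and every weak*-convergent sequence (x*_m) of elements of the weak* sequential closure N_(γ) with weak* limit x*, one has g_n(x*) = lim_{m→∞} g_n(x*_m) for every n. Let (s*_n) ⊆ X* with ‖s*_n‖ ≤ 1, let ν_n > 0 with Σ_{n=1}^∞ ν_n < 1/(2 sup_n ‖g_n‖), and let R : X* → X* be the isomorphism R(x*) = x* + Σ_{n=1}^∞ ν_n g_n(x*) s*_n. Then for every ordinal γ ≤ β, the weak* sequential closure of order γ of K = R(N) satisfies K_(γ) = R(N_(γ)). -/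
/-! Since `sup ‖g_n‖ · Σ ν_n < 1/2`, the map `R` moves each functional by at most half its norm, so
`‖h‖ ≤ 2‖R h‖` and a weak*-convergent (hence, by Banach–Steinhaus, bounded) sequence `R h_m` comes
from a bounded sequence `h_m`. A diagonal subsequence makes every coefficient `g_n(h_m)` converge;
along it `R h_m - h_m` converges in norm by dominated convergence, so `h_m` converges weak* to some
`h`, and sequential weak*-continuity of the `g_n` on `N_(δ)` identifies the limit of `R h_m` as
`R h`. Thus `R` commutes with one step of weak* sequential closure on every `N_(δ)`, `δ < β`, and
transfinite induction gives the claim. -/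

open MeasureTheory Filter Topology Set NormedSpace

set_option synthInstance.maxHeartbeats 1000000
set_option maxHeartbeats 1000000

noncomputable section

/-- The weak* sequential closure (of order one) of a set of functionals: all limits of
weak*-convergent (i.e. pointwise convergent) sequences from `V`. -/
def wsclOne {X : Type*} [NormedAddCommGroup X] [NormedSpace ℝ X]
    (V : Set (StrongDual ℝ X)) : Set (StrongDual ℝ X) :=
  {f | ∃ g : ℕ → StrongDual ℝ X, (∀ n, g n ∈ V) ∧ ∀ x, Tendsto (fun n => g n x) atTop (𝓝 (f x))}

/-- The weak* sequential closure of order `α`: `V_(0) = V` and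
`V_(α) = ⋃_{β<α} (V_(β))_(1)` for `α > 0`. -/
def wscl {X : Type*} [NormedAddCommGroup X] [NormedSpace ℝ X]
    (V : Set (StrongDual ℝ X)) (α : Ordinal) : Set (StrongDual ℝ X) :=
  if α = 0 then V
  else ⋃ (β : Ordinal), ⋃ (_ : β < α), wsclOne (wscl V β)
termination_by α

lemma wscl_zero {X : Type*} [NormedAddCommGroup X] [NormedSpace ℝ X]
    (V : Set (StrongDual ℝ X)) : wscl V 0 = V := by
  rw [wscl, if_pos rfl]

lemma wscl_of_ne_zero {X : Type*} [NormedAddCommGroup X] [NormedSpace ℝ X]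
    (V : Set (StrongDual ℝ X)) {α : Ordinal} (hα : α ≠ 0) :
    wscl V α = ⋃ (β : Ordinal), ⋃ (_ : β < α), wsclOne (wscl V β) := by
  rw [wscl, if_neg hα]

theorem wscl_image_eq_image_wscl {X : Type*} [NormedAddCommGroup X] [NormedSpace ℝ X]
    {f : StrongDual ℝ X → StrongDual ℝ X} {V : Set (StrongDual ℝ X)} {β : Ordinal}
    (hf : ∀ δ < β, wsclOne (f '' wscl V δ) = f '' wsclOne (wscl V δ)) :
    ∀ γ ≤ β, wscl (f '' V) γ = f '' wscl V γ := by
  intro γ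
  induction γ using WellFoundedLT.induction with
  | _ γ IH =>
  intro hγβ
  rcases eq_or_ne γ 0 with rfl | hγ
  · rw [wscl_zero, wscl_zero]
  · simp only [wscl_of_ne_zero _ hγ, Set.image_iUnion]
    refine Set.iUnion₂_congr fun δ hδγ => ?_
    rw [IH δ hδγ (hδγ.le.trans hγβ), hf δ (hδγ.trans_le hγβ)]

theorem exists_norm_le_of_tendsto_apply {X : Type*} [NormedAddCommGroup X] [NormedSpace ℝ X]
    [CompleteSpace X] {u : ℕ → StrongDual ℝ X} {f : StrongDual ℝ X}
    (hu : ∀ x, Tendsto (fun m => u m x) atTop (𝓝 (f x))) : ∃ C, ∀ m, ‖u m‖ ≤ C :=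
  banach_steinhaus fun x => by
    obtain ⟨C, hC⟩ := (hu x).norm.bddAbove_range
    exact ⟨C, fun m => hC (Set.mem_range_self m)⟩

theorem exists_subseq_tendsto_of_abs_le {c : ℕ → ℕ → ℝ} {B : ℝ} (hc : ∀ m n, |c m n| ≤ B) :
    ∃ (a : ℕ → ℝ) (φ : ℕ → ℕ), StrictMono φ ∧
      ∀ n, Tendsto (fun m => c (φ m) n) atTop (𝓝 (a n)) := by
  have hmem : ∀ m, c m ∈ Set.pi Set.univ fun _ => Set.Icc (-B) B :=
    fun m n _ => abs_le.mp (hc m n)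
  obtain ⟨a, -, φ, hφ, hlim⟩ :=
    (isCompact_univ_pi fun _ => isCompact_Icc).tendsto_subseq hmem
  exact ⟨a, φ, hφ, tendsto_pi_nhds.mp hlim⟩

section TsumSmul

variable {F : Type*} [NormedAddCommGroup F] [NormedSpace ℝ F]
  {ν : ℕ → ℝ} {s : ℕ → F}

theorem norm_mul_smul_le (hs : ∀ n, ‖s n‖ ≤ 1) {c B : ℝ} (hc : |c| ≤ B) (n : ℕ) :
    ‖(ν n * c) • s n‖ ≤ |ν n| * B :=
  calc ‖(ν n * c) • s n‖ ≤ |ν n * c| * 1 := by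
        rw [norm_smul, Real.norm_eq_abs]; gcongr; exact hs n
    _ ≤ |ν n| * B := by rw [abs_mul, mul_one]; gcongr

theorem norm_tsum_mul_smul_le (hν0 : ∀ n, 0 ≤ ν n) (hν : Summable ν) (hs : ∀ n, ‖s n‖ ≤ 1)
    {c : ℕ → ℝ} {B : ℝ} (hc : ∀ n, |c n| ≤ B) :
    ‖∑' n, (ν n * c n) • s n‖ ≤ (∑' n, ν n) * B :=
  tsum_of_norm_bounded (hν.hasSum.mul_right B) fun n => by
    simpa only [abs_of_nonneg (hν0 n)] using norm_mul_smul_le (ν := ν) hs (hc n) n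

theorem tendsto_tsum_mul_smul [CompleteSpace F] (hν : Summable ν) (hs : ∀ n, ‖s n‖ ≤ 1)
    {c : ℕ → ℕ → ℝ} {a : ℕ → ℝ} {B : ℝ} (hc : ∀ m n, |c m n| ≤ B)
    (hca : ∀ n, Tendsto (fun m => c m n) atTop (𝓝 (a n))) :
    Tendsto (fun m => ∑' n, (ν n * c m n) • s n) atTop (𝓝 (∑' n, (ν n * a n) • s n)) :=
  tendsto_tsum_of_dominated_convergence (hν.abs.mul_right B)
    (fun n => ((hca n).const_mul (ν n)).smul_const (s n))
    (Eventually.of_forall fun m n => norm_mul_smul_le hs (hc m n) n)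

end TsumSmul

section Perturbation

variable {X : Type*} [NormedAddCommGroup X] [NormedSpace ℝ X]
  {g : ℕ → StrongDual ℝ (StrongDual ℝ X)} {s : ℕ → StrongDual ℝ X} {ν : ℕ → ℝ} {M : ℝ}
  {R : StrongDual ℝ X →L[ℝ] StrongDual ℝ X}

theorem abs_apply_le_of_norm_le (hgM : ∀ n, ‖g n‖ ≤ M) {h : StrongDual ℝ X} {C : ℝ}
    (hC : ‖h‖ ≤ C) (n : ℕ) : |g n h| ≤ M * C :=
  calc |g n h| ≤ ‖g n‖ * ‖h‖ := (g n).le_opNorm h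
    _ ≤ M * C := mul_le_mul (hgM n) hC (norm_nonneg h) ((norm_nonneg (g n)).trans (hgM n))

theorem norm_le_two_mul_norm_apply (hν0 : ∀ n, 0 ≤ ν n) (hν : Summable ν)
    (hs : ∀ n, ‖s n‖ ≤ 1) (hgM : ∀ n, ‖g n‖ ≤ M) (hMν : M * ∑' n, ν n ≤ 1 / 2)
    (hR : ∀ h, HasSum (fun n => (ν n * g n h) • s n) (R h - h)) (h : StrongDual ℝ X) :
    ‖h‖ ≤ 2 * ‖R h‖ := by
  have hRh : ‖R h - h‖ ≤ (∑' n, ν n) * (M * ‖h‖) := by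
    rw [← (hR h).tsum_eq]
    exact norm_tsum_mul_smul_le hν0 hν hs (abs_apply_le_of_norm_le hgM le_rfl)
  have := norm_le_norm_add_norm_sub' h (R h)
  rw [norm_sub_rev] at this
  nlinarith [norm_nonneg h]

theorem tendsto_apply_sub [CompleteSpace X] (hν : Summable ν) (hs : ∀ n, ‖s n‖ ≤ 1)
    (hR : ∀ h, HasSum (fun n => (ν n * g n h) • s n) (R h - h))
    {h : ℕ → StrongDual ℝ X} {a : ℕ → ℝ} {B : ℝ} (hB : ∀ m n, |g n (h m)| ≤ B)
    (ha : ∀ n, Tendsto (fun m => g n (h m)) atTop (𝓝 (a n))) :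
    Tendsto (fun m => R (h m) - h m) atTop (𝓝 (∑' n, (ν n * a n) • s n)) := by
  simp only [← (hR _).tsum_eq]
  exact tendsto_tsum_mul_smul hν hs hB ha

variable {W : Set (StrongDual ℝ X)}

theorem image_wsclOne_subset_wsclOne_image [CompleteSpace X] (hν : Summable ν)
    (hs : ∀ n, ‖s n‖ ≤ 1) (hgM : ∀ n, ‖g n‖ ≤ M)
    (hR : ∀ h, HasSum (fun n => (ν n * g n h) • s n) (R h - h))
    (hW : ∀ xs : ℕ → StrongDual ℝ X, (∀ m, xs m ∈ W) → ∀ x0 : StrongDual ℝ X,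
      (∀ x : X, Tendsto (fun m => xs m x) atTop (𝓝 (x0 x))) →
      ∀ n, Tendsto (fun m => g n (xs m)) atTop (𝓝 (g n x0))) :
    R '' wsclOne W ⊆ wsclOne (R '' W) := by
  rintro _ ⟨x0, ⟨xs, hxsW, hxs⟩, rfl⟩
  refine ⟨fun m => R (xs m), fun m => Set.mem_image_of_mem R (hxsW m), fun x => ?_⟩
  obtain ⟨C, hC⟩ := exists_norm_le_of_tendsto_apply hxs
  have hsub := tendsto_apply_sub hν hs hR (fun m => abs_apply_le_of_norm_le hgM (hC m))
    (hW xs hxsW x0 hxs)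
  rw [(hR x0).tsum_eq] at hsub
  simpa using (hsub.eval_const x).add (hxs x)

theorem wsclOne_image_subset_image_wsclOne [CompleteSpace X] (hν0 : ∀ n, 0 ≤ ν n)
    (hν : Summable ν) (hs : ∀ n, ‖s n‖ ≤ 1) (hgM : ∀ n, ‖g n‖ ≤ M)
    (hMν : M * ∑' n, ν n ≤ 1 / 2)
    (hR : ∀ h, HasSum (fun n => (ν n * g n h) • s n) (R h - h))
    (hW : ∀ xs : ℕ → StrongDual ℝ X, (∀ m, xs m ∈ W) → ∀ x0 : StrongDual ℝ X,
      (∀ x : X, Tendsto (fun m => xs m x) atTop (𝓝 (x0 x))) →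
      ∀ n, Tendsto (fun m => g n (xs m)) atTop (𝓝 (g n x0))) :
    wsclOne (R '' W) ⊆ R '' wsclOne W := by
  rintro z ⟨u, hu, huz⟩
  choose h hhW hRh using hu
  obtain rfl : u = fun m => R (h m) := funext fun m => (hRh m).symm
  obtain ⟨C, hC⟩ := exists_norm_le_of_tendsto_apply huz
  have hB : ∀ m n, |g n (h m)| ≤ M * (2 * C) := fun m => abs_apply_le_of_norm_le hgM <|
    (norm_le_two_mul_norm_apply hν0 hν hs hgM hMν hR (h m)).trans (by gcongr; exact hC m)
  obtain ⟨a, φ, hφ, ha⟩ := exists_subseq_tendsto_of_abs_le hB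
  obtain ⟨w, hw⟩ : ∃ w, ∑' n, (ν n * a n) • s n = w := ⟨_, rfl⟩
  have hsub := tendsto_apply_sub hν hs hR (fun m => hB (φ m)) ha
  rw [hw] at hsub
  have hlim : ∀ x, Tendsto (fun m => h (φ m) x) atTop (𝓝 ((z - w) x)) := fun x => by
    simpa using ((huz x).comp hφ.tendsto_atTop).sub (hsub.eval_const x)
  have hag : ∀ n, a n = g n (z - w) := fun n =>
    tendsto_nhds_unique (ha n) (hW _ (fun m => hhW (φ m)) _ hlim n)
  have hRw : R (z - w) - (z - w) = w := by
    rw [← (hR _).tsum_eq]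
    simp only [← hag]
    exact hw
  refine ⟨z - w, ⟨h ∘ φ, fun m => hhW (φ m), hlim⟩, ?_⟩
  rw [← sub_add_cancel (R (z - w)) (z - w), hRw, add_sub_cancel]

end Perturbation

theorem wscl_of_image_under_R_general {X : Type*} [NormedAddCommGroup X] [NormedSpace ℝ X]
    [CompleteSpace X]
    (β : Ordinal)
    (N : Submodule ℝ (StrongDual ℝ X))
    (g : ℕ → StrongDual ℝ (StrongDual ℝ X)) (hgbdd : BddAbove (Set.range fun n => ‖g n‖))
    (hcont : ∀ γ < β, ∀ xs : ℕ → StrongDual ℝ X,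
      (∀ m, xs m ∈ wscl (N : Set (StrongDual ℝ X)) γ) →
      ∀ x0 : StrongDual ℝ X, (∀ x : X, Tendsto (fun m => xs m x) atTop (𝓝 (x0 x))) →
      ∀ n, Tendsto (fun m => g n (xs m)) atTop (𝓝 (g n x0)))
    (s : ℕ → StrongDual ℝ X) (hs : ∀ n, ‖s n‖ ≤ 1)
    (ν : ℕ → ℝ) (hν : ∀ n, 0 < ν n) (hνsum : Summable ν)
    (hνlt : ∑' n, ν n < 1 / (2 * ⨆ n, ‖g n‖))
    (R : StrongDual ℝ X →L[ℝ] StrongDual ℝ X)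
    (hR : ∀ xs : StrongDual ℝ X, HasSum (fun n => (ν n * g n xs) • s n) (R xs - xs)) :
    ∀ γ ≤ β, wscl (⇑R '' (N : Set (StrongDual ℝ X))) γ = ⇑R '' wscl (N : Set (StrongDual ℝ X)) γ := by
  set M := ⨆ n, ‖g n‖
  have hgM : ∀ n, ‖g n‖ ≤ M := le_ciSup hgbdd
  have hν0 : ∀ n, 0 ≤ ν n := fun n => (hν n).le
  have hMν : M * ∑' n, ν n ≤ 1 / 2 := by
    rcases ((norm_nonneg (g 0)).trans (hgM 0)).eq_or_lt with hM | hM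
    · rw [← hM, zero_mul]; norm_num
    · calc M * ∑' n, ν n ≤ M * (1 / (2 * M)) := by gcongr
        _ = 1 / 2 := by field_simp
  exact wscl_image_eq_image_wscl fun δ hδ =>
    (wsclOne_image_subset_image_wsclOne hν0 hνsum hs hgM hMν hR (hcont δ hδ)).antisymm
      (image_wsclOne_subset_wsclOne_image hνsum hs hgM hR (hcont δ hδ))

/-- If `(g_n) ⊆ X**` is bounded and weak*-sequentially continuous on the closures `N_(γ)`
for `γ < β`, and `R(x*) = x* + Σ_n ν_n g_n(x*) s_n` is the corresponding isomorphism of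
`X*`, then the weak* sequential closures of `K = R(N)` satisfy `K_(γ) = R(N_(γ))` for all
`γ ≤ β`. -/
theorem wscl_of_image_under_R {X : Type*} [NormedAddCommGroup X] [NormedSpace ℝ X]
    [CompleteSpace X]
    (β : Ordinal) (hβ : β.card ≤ Cardinal.aleph0)
    (N : Submodule ℝ (StrongDual ℝ X))
    (g : ℕ → StrongDual ℝ (StrongDual ℝ X)) (hgbdd : BddAbove (Set.range fun n => ‖g n‖))
    (hcont : ∀ γ < β, ∀ xs : ℕ → StrongDual ℝ X,
      (∀ m, xs m ∈ wscl (N : Set (StrongDual ℝ X)) γ) →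
      ∀ x0 : StrongDual ℝ X, (∀ x : X, Tendsto (fun m => xs m x) atTop (𝓝 (x0 x))) →
      ∀ n, Tendsto (fun m => g n (xs m)) atTop (𝓝 (g n x0)))
    (s : ℕ → StrongDual ℝ X) (hs : ∀ n, ‖s n‖ ≤ 1)
    (ν : ℕ → ℝ) (hν : ∀ n, 0 < ν n) (hνsum : Summable ν)
    (hνlt : ∑' n, ν n < 1 / (2 * ⨆ n, ‖g n‖))
    (R : StrongDual ℝ X →L[ℝ] StrongDual ℝ X)
    (hR : ∀ xs : StrongDual ℝ X, HasSum (fun n => (ν n * g n xs) • s n) (R xs - xs)) :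
    ∀ γ ≤ β, wscl (⇑R '' (N : Set (StrongDual ℝ X))) γ = ⇑R '' wscl (N : Set (StrongDual ℝ X)) γ :=
  wscl_of_image_under_R_general β N g hgbdd hcont s hs ν hν hνsum hνlt R hR

end
end

section
/- Let F and G be infinite-dimensional Banach spaces with injective continuous linear embeddings into L¹(0,1), and let T : F → G be an injective integral operator with analytic kernel (with kernel K analytic on Γ × Δ for open sets Γ, Δ ⊆ ℂ containing [0,1]). Then G contains an infinite linearly independent sequence of elements whose images in L¹(0,1) are restrictions to [0,1] of functions analytic on an open set containing [0,1]; in particular G satisfies the hypothesis on G in Theorem 1. -/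
open MeasureTheory Filter Topology Set

set_option synthInstance.maxHeartbeats 1000000
set_option maxHeartbeats 1000000

noncomputable section

/-- Lebesgue measure on (0,1]: the measure giving `L¹(0,1)`. -/
def μ01 : Measure ℝ := volume.restrict (Set.Ioc 0 1)

/-- The segment [0,1] viewed as a subset of ℂ. -/
def segIcc : Set ℂ := Complex.ofReal '' Set.Icc 0 1

/-- `T : F → G` is an integral operator with analytic kernel (with respect to the
embeddings `jF`, `jG` into `L¹(0,1)`). -/
def IsIntAnKer {F G : Type*} [NormedAddCommGroup F] [NormedSpace ℂ F]
    [NormedAddCommGroup G] [NormedSpace ℂ G]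
    (jF : F →L[ℂ] Lp ℂ 1 μ01) (jG : G →L[ℂ] Lp ℂ 1 μ01) (T : F →L[ℂ] G) : Prop :=
  ∃ (Γ Δ : Set ℂ) (K : ℂ × ℂ → ℂ),
    IsOpen Γ ∧ IsOpen Δ ∧ segIcc ⊆ Γ ∧ segIcc ⊆ Δ ∧
    AnalyticOnNhd ℂ K (Γ ×ˢ Δ) ∧
    ∀ f : F, ∀ᵐ t₂ ∂μ01, (jG (T f) : ℝ → ℂ) t₂ = ∫ t₁, K (↑t₁, ↑t₂) * (jF f : ℝ → ℂ) t₁ ∂μ01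

lemma mem_segIcc_of_Ioc {t : ℝ} (ht : t ∈ Set.Ioc (0:ℝ) 1) : (t : ℂ) ∈ segIcc :=
  ⟨t, ⟨le_of_lt ht.1, ht.2⟩, rfl⟩

lemma analytic_param_integral {Γ Δ : Set ℂ} (hΓ : IsOpen Γ) (hΔ : IsOpen Δ)
    (hsΓ : segIcc ⊆ Γ) {K : ℂ × ℂ → ℂ} (hK : AnalyticOnNhd ℂ K (Γ ×ˢ Δ))
    {g : ℝ → ℂ} (hg : Integrable g μ01) :
    AnalyticOnNhd ℂ (fun z => ∫ t, K (↑t, z) * g t ∂μ01) Δ := by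
  apply DifferentiableOn.analyticOnNhd _ hΔ
  intro x₀ hx₀
  obtain ⟨δ, hδpos, hδ⟩ := Metric.isOpen_iff.mp hΔ x₀ hx₀
  set ε : ℝ := δ / 2 with hε
  have hεpos : 0 < ε := by positivity
  have hεδ : ε < δ := by rw [hε]; linarith
  have hcb : Metric.closedBall x₀ ε ⊆ Δ := fun z hz =>
    hδ (lt_of_le_of_lt hz hεδ)
  have hsegcpt : IsCompact segIcc := isCompact_Icc.image Complex.continuous_ofReal
  set S : Set (ℂ × ℂ) := segIcc ×ˢ Metric.closedBall x₀ ε with hS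
  have hScpt : IsCompact S := hsegcpt.prod (isCompact_closedBall x₀ ε)
  have hSsub : S ⊆ Γ ×ˢ Δ := Set.prod_mono hsΓ hcb
  have hfd : AnalyticOnNhd ℂ (fderiv ℂ K) (Γ ×ˢ Δ) := hK.fderiv
  obtain ⟨C, hC⟩ := hScpt.exists_bound_of_continuousOn ((hfd.continuousOn).mono hSsub)
  obtain ⟨C₀, hC₀⟩ := hScpt.exists_bound_of_continuousOn ((hK.continuousOn).mono hSsub)
  have hmemS : ∀ {t : ℝ}, t ∈ Set.Ioc (0:ℝ) 1 → ∀ {x : ℂ}, x ∈ Metric.closedBall x₀ ε →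
      ((t : ℂ), x) ∈ S := fun {t} ht {x} hx => ⟨mem_segIcc_of_Ioc ht, hx⟩
  have hmeas : ∀ x ∈ Metric.closedBall x₀ ε,
      AEStronglyMeasurable (fun t : ℝ => K (↑t, x) * g t) μ01 := by
    intro x hx
    apply AEStronglyMeasurable.mul _ hg.1
    have : ContinuousOn (fun t : ℝ => K (↑t, x)) (Set.Ioc 0 1) := by
      intro t ht
      have h1 : ContinuousAt K ((t : ℂ), x) :=
        (hK _ (hSsub (hmemS ht hx))).continuousAt
      have h0 : ContinuousAt (fun s : ℝ => ((s : ℂ), x)) t :=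
        (Complex.continuous_ofReal.prodMk continuous_const).continuousAt
      have hc : ContinuousAt (K ∘ fun s : ℝ => ((s : ℂ), x)) t := ContinuousAt.comp h1 h0
      exact hc.continuousWithinAt
    exact this.aestronglyMeasurable measurableSet_Ioc
  have hmem : ∀ᵐ t ∂μ01, t ∈ Set.Ioc (0:ℝ) 1 := ae_restrict_mem measurableSet_Ioc
  have hmeas' : AEStronglyMeasurable (fun t : ℝ => fderiv ℂ K (↑t, x₀) ((0:ℂ), (1:ℂ)) * g t) μ01 := by
    apply AEStronglyMeasurable.mul _ hg.1
    have : ContinuousOn (fun t : ℝ => fderiv ℂ K (↑t, x₀) ((0:ℂ), (1:ℂ))) (Set.Ioc 0 1) := by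
      intro t ht
      have h1 : ContinuousAt (fderiv ℂ K) ((t : ℂ), x₀) :=
        (hfd _ (hSsub (hmemS ht (Metric.mem_closedBall_self hεpos.le)))).continuousAt
      have h0 : ContinuousAt (fun s : ℝ => ((s : ℂ), x₀)) t :=
        (Complex.continuous_ofReal.prodMk continuous_const).continuousAt
      have h2 : ContinuousAt (fderiv ℂ K ∘ fun s : ℝ => ((s : ℂ), x₀)) t :=
        ContinuousAt.comp h1 h0
      exact ((ContinuousLinearMap.apply ℂ ℂ ((0:ℂ), (1:ℂ))).continuous.continuousAt.comp
        h2).continuousWithinAt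
    exact this.aestronglyMeasurable measurableSet_Ioc
  have key := hasDerivAt_integral_of_dominated_loc_of_deriv_le (μ := μ01)
    (F := fun x (t : ℝ) => K (↑t, x) * g t)
    (F' := fun x (t : ℝ) => fderiv ℂ K (↑t, x) ((0:ℂ), (1:ℂ)) * g t)
    (x₀ := x₀) (bound := fun t => C * ‖g t‖) (Metric.ball_mem_nhds x₀ hεpos)
    ?_ ?_ ?_ ?_ ?_ ?_
  · exact (key.2.differentiableAt).differentiableWithinAt
  · filter_upwards [Metric.ball_mem_nhds x₀ hεpos] with x hx
    exact hmeas x (Metric.ball_subset_closedBall hx)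
  · -- integrability of F x₀
    apply Integrable.mono' (hg.norm.const_mul C₀)
      (hmeas x₀ (Metric.mem_closedBall_self hεpos.le))
    filter_upwards [hmem] with t ht
    rw [norm_mul]
    exact mul_le_mul_of_nonneg_right
      (hC₀ _ (hmemS ht (Metric.mem_closedBall_self hεpos.le))) (norm_nonneg _)
  · exact hmeas'
  · -- bound on derivative
    filter_upwards [hmem] with t ht x hx
    rw [norm_mul]
    have hb : ‖fderiv ℂ K ((t:ℂ), x) ((0:ℂ), (1:ℂ))‖ ≤ C := by
      calc ‖fderiv ℂ K ((t:ℂ), x) ((0:ℂ), (1:ℂ))‖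
          ≤ ‖fderiv ℂ K ((t:ℂ), x)‖ * ‖((0:ℂ), (1:ℂ))‖ :=
            ContinuousLinearMap.le_opNorm _ _
        _ ≤ C * 1 := by
            apply mul_le_mul (hC _ (hmemS ht (Metric.ball_subset_closedBall hx))) _
              (norm_nonneg _) ((norm_nonneg _).trans
                (hC _ (hmemS ht (Metric.mem_closedBall_self hεpos.le))))
            rw [Prod.norm_def]
            simp
        _ = C := mul_one C
    exact mul_le_mul_of_nonneg_right hb (norm_nonneg _)
  · exact hg.norm.const_mul C
  · -- differentiability
    filter_upwards [hmem] with t ht x hx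
    have hmem2 : ((t:ℂ), x) ∈ Γ ×ˢ Δ := hSsub (hmemS ht (Metric.ball_subset_closedBall hx))
    have hKd : HasFDerivAt K (fderiv ℂ K ((t:ℂ), x)) ((t:ℂ), x) :=
      ((hK _ hmem2).differentiableAt).hasFDerivAt
    have hinner : HasFDerivAt (fun z : ℂ => (((t:ℝ):ℂ), z))
        (((0 : ℂ →L[ℂ] ℂ)).prod (ContinuousLinearMap.id ℂ ℂ)) x :=
      HasFDerivAt.prodMk (hasFDerivAt_const _ _) (hasFDerivAt_id x)
    have hcomp := (hKd.comp x hinner).hasDerivAt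
    have : HasDerivAt (fun z : ℂ => K (↑t, z)) (fderiv ℂ K ((t:ℂ), x) ((0:ℂ), (1:ℂ))) x := by
      simp at hcomp
      exact hcomp
    exact this.mul_const (g t)

/-- **Remark 2.** If `F` and `G` are infinite-dimensional Banach function spaces on [0,1]
and `T : F → G` is an injective integral operator with analytic kernel, then `G` contains
an infinite linearly independent sequence of elements whose images in `L¹(0,1)` are
restrictions of functions analytic on a common open neighbourhood of [0,1] (i.e. `G`
satisfies the hypothesis of Theorem 1). -/
theorem remark2 {F G : Type*} [NormedAddCommGroup F] [NormedSpace ℂ F] [CompleteSpace F]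
    [NormedAddCommGroup G] [NormedSpace ℂ G] [CompleteSpace G]
    (hF : ¬ FiniteDimensional ℂ F) (hG : ¬ FiniteDimensional ℂ G)
    (j : F →L[ℂ] Lp ℂ 1 μ01) (hj : Function.Injective j)
    (jG : G →L[ℂ] Lp ℂ 1 μ01) (hjG : Function.Injective jG)
    (T : F →L[ℂ] G) (hT : Function.Injective T) (hker : IsIntAnKer j jG T) :
    ∃ Δ : Set ℂ, IsOpen Δ ∧ segIcc ⊆ Δ ∧
      ∃ q : ℕ → G, LinearIndependent ℂ q ∧
        ∃ qt : ℕ → ℂ → ℂ, (∀ i, AnalyticOnNhd ℂ (qt i) Δ) ∧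
          ∀ i, ∀ᵐ t ∂μ01, (jG (q i) : ℝ → ℂ) t = qt i ↑t := by
  obtain ⟨Γ, Δ, K, hΓ, hΔ, hsΓ, hsΔ, hK, hrep⟩ := hker
  -- a linearly independent sequence in F
  have b := Module.Basis.ofVectorSpace ℂ F
  haveI : Infinite (Module.Basis.ofVectorSpaceIndex ℂ F) := by
    by_contra h
    haveI : Finite (Module.Basis.ofVectorSpaceIndex ℂ F) := not_infinite_iff_finite.mp h
    haveI := Fintype.ofFinite (Module.Basis.ofVectorSpaceIndex ℂ F)
    exact hF (Module.Finite.of_basis b)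
  set e := Infinite.natEmbedding (Module.Basis.ofVectorSpaceIndex ℂ F)
  set f : ℕ → F := b ∘ e with hf
  have hfli : LinearIndependent ℂ f := b.linearIndependent.comp e e.injective
  refine ⟨Δ, hΔ, hsΔ, fun i => T (f i), ?_, fun i z => ∫ t₁, K (↑t₁, z) * (j (f i) : ℝ → ℂ) t₁ ∂μ01,
    ?_, ?_⟩
  · exact hfli.map' T.toLinearMap (LinearMap.ker_eq_bot.mpr hT)
  · intro i
    exact analytic_param_integral hΓ hΔ hsΓ hK (L1.integrable_coeFn (j (f i)))
  · intro i
    filter_upwards [hrep (f i)] with t ht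
    exact ht

end
end
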